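/- arXiv:1011.0651 — 5 statements merged into one kernel-verified Lean document; each statement's English description precedes it below -/
import Mathlib

section
/- Let Λ_r = ℤ[e_1,…,e_r] be the ring of symmetric polynomials in r variables, with e_i the elementary symmetric polynomials and h_i the complete homogeneous symmetric polynomials. For a partition λ of length ≤ r with λ_1 > n−r (i.e. λ ∉ Π_{r,n−r}), the Schur polynomial s_λ lies in the ideal (h_{n−r+1},…,h_n) of Λ_r. -/
/-!
Expanding the Jacobi–Trudi determinant along its first row writes `s_λ` as a combination of
`h_{λ₁}, …, h_{λ₁+r-1}` with symmetric coefficients (the signed complementary minors), and all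
these indices exceed `n - r`. For `m > r` the relation `∑_{i=0}^{r} (-1)^i e_i h_{m-i} = 0`
expresses `h_m` through its `r` predecessors, so once `h_{n-r+1}, …, h_n` lie in a
`Λ_r`-submodule, so does every `h_m` with `m > n - r`. The relation is checked coefficientwise:
the coefficient of `x^μ` with `|μ| = m` is `∑_{S ⊆ supp μ} (-1)^{|S|} = 0`.
-/

noncomputable section

open MvPolynomial

/-- The `d`-th complete homogeneous symmetric polynomial in `r` variables over `ℤ`:
the sum of all monomials of degree `d`. -/
def hpoly (r d : ℕ) : MvPolynomial (Fin r) ℤ :=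
  ∑ f ∈ Finset.Nat.antidiagonalTuple r d,
    monomial (Finsupp.equivFunOnFinite.symm f) (1 : ℤ)

/-- `h` extended to integer indices, vanishing for negative indices. -/
def hz (r : ℕ) (j : ℤ) : MvPolynomial (Fin r) ℤ :=
  if 0 ≤ j then hpoly r j.toNat else 0

/-- The Schur polynomial, via the Jacobi–Trudi formula
`s_λ = det (h_{λ_i − i + j})_{1 ≤ i,j ≤ r}`. -/
def schur (r : ℕ) (l : Fin r → ℕ) : MvPolynomial (Fin r) ℤ :=
  (Matrix.of fun i j : Fin r =>
    hz r ((l i : ℤ) - ((i : ℕ) : ℤ) + ((j : ℕ) : ℤ))).det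

open Finset

theorem coeff_hpoly (r d : ℕ) (μ : Fin r →₀ ℕ) :
    coeff μ (hpoly r d) = if μ.degree = d then 1 else 0 := by
  simp [hpoly, coeff_sum, coeff_monomial, Equiv.symm_apply_eq,
    Finset.Nat.mem_antidiagonalTuple, Finsupp.degree_eq_sum]

theorem hpoly_isSymmetric (r d : ℕ) : (hpoly r d).IsSymmetric := by
  intro e
  ext μ
  obtain ⟨ν, rfl⟩ := Finsupp.mapDomain_surjective e.surjective μ
  rw [coeff_rename_mapDomain _ e.injective, coeff_hpoly, coeff_hpoly, Finsupp.degree_mapDomain]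

theorem sum_single_one_le_iff {σ : Type*} (S : Finset σ) (μ : σ →₀ ℕ) :
    ∑ j ∈ S, Finsupp.single j 1 ≤ μ ↔ S ⊆ μ.support := by
  classical
  simp only [Finsupp.le_def, Finsupp.finsetSum_apply, Finsupp.single_apply, sum_ite_eq',
    subset_iff, Finsupp.mem_support_iff]
  refine ⟨fun h a ha => Nat.one_le_iff_ne_zero.1 (by simpa [ha] using h a), fun h a => ?_⟩
  split_ifs with ha
  · exact Nat.one_le_iff_ne_zero.2 (h ha)
  · exact Nat.zero_le _

theorem degree_sum_single_one {σ : Type*} (S : Finset σ) :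
    (∑ j ∈ S, Finsupp.single j 1 : σ →₀ ℕ).degree = #S := by
  simp [map_sum, Finsupp.degree_single]

theorem coeff_monomial_sum_single_mul_hpoly {r : ℕ} (S : Finset (Fin r)) (d : ℕ)
    (μ : Fin r →₀ ℕ) :
    coeff μ (monomial (∑ j ∈ S, Finsupp.single j 1) 1 * hpoly r d) =
      if S ⊆ μ.support ∧ μ.degree = d + #S then 1 else 0 := by
  by_cases hS : S ⊆ μ.support
  · obtain ⟨ν, rfl⟩ := exists_add_of_le ((sum_single_one_le_iff S μ).2 hS)
    rw [coeff_monomial_mul, one_mul, coeff_hpoly, map_add, degree_sum_single_one]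
    simp only [hS, true_and, add_comm (#S), Nat.add_right_cancel_iff]
  · rw [coeff_monomial_mul', if_neg (mt (sum_single_one_le_iff S μ).1 hS),
      if_neg fun h => hS h.1]

theorem sum_neg_one_pow_smul_esymm_mul_hpoly {r m : ℕ} (hm : r < m) :
    ∑ i ∈ range (r + 1), (-1 : ℤ) ^ i • (esymm (Fin r) ℤ i * hpoly r (m - i)) = 0 := by
  ext μ
  have hterm : ∀ i ∈ range (r + 1), coeff μ ((-1 : ℤ) ^ i • (esymm (Fin r) ℤ i * hpoly r (m - i)))
      = ∑ S ∈ powersetCard i univ, if S ⊆ μ.support ∧ μ.degree = m then (-1) ^ #S else 0 := by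
    intro i hi
    rw [esymm_eq_sum_monomial, sum_mul, coeff_smul, coeff_sum, smul_eq_mul, mul_sum]
    refine sum_congr rfl fun S hS => ?_
    rw [mem_powersetCard] at hS
    rw [mem_range] at hi
    rw [coeff_monomial_sum_single_mul_hpoly, hS.2, Nat.sub_add_cancel (by omega), mul_ite,
      mul_one, mul_zero]
  have hpowerset := sum_powerset (univ : Finset (Fin r))
    fun S => if S ⊆ μ.support ∧ μ.degree = m then (-1 : ℤ) ^ #S else 0
  rw [card_univ, Fintype.card_fin] at hpowerset
  rw [coeff_sum, sum_congr rfl hterm, ← hpowerset, coeff_zero]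
  by_cases hμ : μ.degree = m
  · have hsupp : μ.support ≠ ∅ := by
      rintro h
      rw [Finsupp.support_eq_empty.1 h, map_zero] at hμ
      omega
    have hfilter : univ.powerset.filter (· ⊆ μ.support) = μ.support.powerset := by ext; simp
    simp only [hμ, and_true]
    rw [← sum_filter, hfilter, sum_powerset_neg_one_pow_card, if_neg hsupp]
  · simp [hμ]

theorem mul_mem_of_isSymmetric {σ R : Type*} [CommSemiring R]
    {N : Submodule (symmetricSubalgebra σ R) (MvPolynomial σ R)} {p q : MvPolynomial σ R}
    (hp : p.IsSymmetric) (hq : q ∈ N) : p * q ∈ N :=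
  N.smul_mem ⟨p, hp⟩ hq

theorem hpoly_mem_of_forall_mem_Ico {r a : ℕ}
    {N : Submodule (symmetricSubalgebra (Fin r) ℤ) (MvPolynomial (Fin r) ℤ)} (ha : 0 < a)
    (hN : ∀ k ∈ Ico a (a + r), hpoly r k ∈ N) {m : ℕ} (hm : a ≤ m) : hpoly r m ∈ N := by
  induction m using Nat.strong_induction_on with
  | _ m ih =>
  rcases lt_or_ge m (a + r) with hlt | hge
  · exact hN m (mem_Ico.2 ⟨hm, hlt⟩)
  have hrec := sum_neg_one_pow_smul_esymm_mul_hpoly (r := r) (m := m) (by omega)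
  rw [sum_range_succ', pow_zero, one_smul, esymm_zero, one_mul, Nat.sub_zero] at hrec
  rw [eq_neg_of_add_eq_zero_right hrec]
  refine N.neg_mem (N.sum_mem fun i hi => zsmul_mem ?_ _)
  rw [mem_range] at hi
  exact mul_mem_of_isSymmetric (esymm_isSymmetric _ _ _) (ih _ (by omega) (by omega))

theorem isSymmetric_det {σ R ι : Type*} [CommRing R] [Fintype ι] [DecidableEq ι]
    (M : Matrix ι ι (MvPolynomial σ R)) (hM : ∀ i j, (M i j).IsSymmetric) :
    M.det.IsSymmetric := by
  intro e
  rw [AlgHom.map_det]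
  exact congrArg Matrix.det (Matrix.ext fun i j => hM i j e)

theorem det_mem_of_row_zero_mem {σ R : Type*} [CommRing R] {k : ℕ}
    {N : Submodule (symmetricSubalgebra σ R) (MvPolynomial σ R)}
    (M : Matrix (Fin (k + 1)) (Fin (k + 1)) (MvPolynomial σ R))
    (hsymm : ∀ (i : Fin k) j, (M i.succ j).IsSymmetric) (hrow : ∀ j, M 0 j ∈ N) : M.det ∈ N := by
  rw [Matrix.det_succ_row_zero]
  refine N.sum_mem fun j _ => ?_
  have hsign : ((-1 : MvPolynomial σ R) ^ (j : ℕ)).IsSymmetric := by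
    simpa using IsSymmetric.C (σ := σ) ((-1 : R) ^ (j : ℕ))
  rw [mul_right_comm]
  exact mul_mem_of_isSymmetric (hsign.mul (isSymmetric_det _ fun i j' => hsymm i _)) (hrow j)

theorem exists_eq_sum_mul_hpoly_of_mem_span {r : ℕ} {s : Finset ℕ} {q : MvPolynomial (Fin r) ℤ}
    (hq : q ∈ Submodule.span (symmetricSubalgebra (Fin r) ℤ) (hpoly r '' s)) :
    ∃ g : ℕ → MvPolynomial (Fin r) ℤ, (∀ k, (g k).IsSymmetric) ∧
      q = ∑ k ∈ s, g k * hpoly r k := by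
  classical
  obtain ⟨c, rfl⟩ := (Fintype.mem_span_image_iff_exists_fun _).1 hq
  refine ⟨fun k => if hk : k ∈ s then c ⟨k, hk⟩ else 0, fun k => ?_, ?_⟩
  · dsimp only
    split_ifs
    exacts [(c _).2, IsSymmetric.zero]
  · rw [← sum_coe_sort s]
    exact sum_congr rfl fun k _ => by simp [Subalgebra.smul_def]

theorem hz_isSymmetric (r : ℕ) (j : ℤ) : (hz r j).IsSymmetric := by
  unfold hz
  split_ifs
  exacts [hpoly_isSymmetric _ _, IsSymmetric.zero]

theorem hz_natCast (r d : ℕ) : hz r d = hpoly r d := by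
  simp [hz]

theorem stmt0_general (r n : ℕ) (hr : 0 < r) (hrn : r ≤ n)
    (l : Fin r → ℕ)
    (hbig : n - r < l ⟨0, hr⟩) :
    ∃ g : ℕ → MvPolynomial (Fin r) ℤ,
      (∀ k, (g k).IsSymmetric) ∧
      schur r l = ∑ k ∈ Finset.Icc (n - r + 1) n, g k * hpoly r k := by
  obtain ⟨k, rfl⟩ := Nat.exists_eq_add_one.2 hr
  apply exists_eq_sum_mul_hpoly_of_mem_span
  refine det_mem_of_row_zero_mem _ (fun i j => hz_isSymmetric _ _) fun j => ?_
  have hentry : (l 0 : ℤ) - ((0 : Fin (k + 1)) : ℕ) + (j : ℕ) = ((l 0 + j : ℕ) : ℤ) := by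
    simp
  rw [Matrix.of_apply, hentry, hz_natCast]
  have hl0 : n - (k + 1) < l 0 := hbig
  refine hpoly_mem_of_forall_mem_Ico (a := n - (k + 1) + 1) (by omega)
    (fun m hm => Submodule.subset_span (Set.mem_image_of_mem _ ?_)) (by omega)
  rw [mem_Ico] at hm
  rw [coe_Icc, Set.mem_Icc]
  omega

/-- For a partition `λ` of length `≤ r` with `λ₁ > n − r`, the Schur polynomial `s_λ`
lies in the ideal of `Λ_r` (the ring of symmetric polynomials) generated by
`h_{n−r+1}, …, h_n`; membership in the ideal of `Λ_r` is expressed by a representation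
`s_λ = ∑ g_k h_k` with all coefficients `g_k` symmetric polynomials. -/
theorem stmt0 (r n : ℕ) (hr : 0 < r) (hrn : r ≤ n)
    (l : Fin r → ℕ) (hl : ∀ i j : Fin r, i ≤ j → l j ≤ l i)
    (hbig : n - r < l ⟨0, hr⟩) :
    ∃ g : ℕ → MvPolynomial (Fin r) ℤ,
      (∀ k, (g k).IsSymmetric) ∧
      schur r l = ∑ k ∈ Finset.Icc (n - r + 1) n, g k * hpoly r k :=
  stmt0_general r n hr hrn l hbig
end
end

section
/- There exists a matrix M(t) with entries in ℤ[t] such that M(t) is symplectic with respect to the standard symplectic form ω_4 (i.e. M(t)^T ω_4 M(t) = ω_4 as matrices over ℤ[t]), M(0) is the 4×4 identity matrix, and M(1) is the block permutation matrix exchanging the two standard 2×2 symplectic blocks (the matrix with rows (0,0,1,0),(0,0,0,1),(1,0,0,0),(0,1,0,0)). -/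
open Matrix

/-- The standard symplectic form `ω₄` as a matrix over `ℤ[t]`. -/
noncomputable def om4 : Matrix (Fin 4) (Fin 4) (Polynomial ℤ) :=
  !![0, 1, 0, 0; -1, 0, 0, 0; 0, 0, 0, 1; 0, 0, -1, 0]

/-- The block permutation matrix exchanging the two standard 2×2 symplectic blocks. -/
def swapZ : Matrix (Fin 4) (Fin 4) ℤ :=
  !![0, 0, 1, 0; 0, 0, 0, 1; 1, 0, 0, 0; 0, 1, 0, 0]

namespace SymplecticPath

variable {R : Type*} [CommRing R]

variable (R) in
def omega4 : Matrix (Fin 4) (Fin 4) R :=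
  !![0, 1, 0, 0; -1, 0, 0, 0; 0, 0, 0, 1; 0, 0, -1, 0]

def path (t : R) : Matrix (Fin 4) (Fin 4) R :=
  !![1 - t^2, 0, -2*t + 13*t^3 - 14*t^5 + 4*t^7, 8*t^2 - 12*t^4 + 4*t^6;
     0, 1 - t^2, -2*t^2 + 2*t^4, -t + 2*t^3;
     t, 0, 1 - 7*t^2 + 10*t^4 - 4*t^6, -4*t + 8*t^3 - 4*t^5;
     0, 2*t - t^3, 2*t - 4*t^3 + 2*t^5, 1 - 3*t^2 + 2*t^4]

theorem path_transpose_mul_omega4_mul (t : R) : (path t)ᵀ * omega4 R * path t = omega4 R := by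
  ext i j
  fin_cases i <;> fin_cases j <;>
    simp [path, omega4, mul_apply, Fin.sum_univ_four] <;> ring

theorem map_path {S : Type*} [CommRing S] (f : R →+* S) (t : R) :
    (path t).map f = path (f t) := by
  ext i j
  fin_cases i <;> fin_cases j <;> simp [path, map_ofNat]

theorem path_zero : path (0 : R) = 1 := by
  ext i j
  fin_cases i <;> fin_cases j <;> simp [path]

theorem path_one : path (1 : R) = !![0, 0, 1, 0; 0, 0, 0, 1; 1, 0, 0, 0; 0, 1, 0, 0] := by
  ext i j
  fin_cases i <;> fin_cases j <;> simp [path] <;> norm_num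

end SymplecticPath

open SymplecticPath in
/-- There is a matrix `M(t)` over `ℤ[t]`, symplectic for `ω₄` (i.e. `M(t)ᵀ ω₄ M(t) = ω₄`),
with `M(0)` the 4×4 identity matrix and `M(1)` the block permutation matrix exchanging the
two standard 2×2 symplectic blocks. -/
theorem stmt8 :
    ∃ M : Matrix (Fin 4) (Fin 4) (Polynomial ℤ),
      Mᵀ * om4 * M = om4 ∧
      M.map (Polynomial.eval 0) = 1 ∧
      M.map (Polynomial.eval 1) = swapZ := by
  refine ⟨path Polynomial.X, path_transpose_mul_omega4_mul _, ?_, ?_⟩ <;>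
    rw [← Polynomial.coe_evalRingHom, map_path, Polynomial.coe_evalRingHom, Polynomial.eval_X]
  exacts [path_zero, path_one]
end

section
/- Every matrix in Sp_{2r}(ℤ) (integer matrices preserving the standard symplectic form ω_{2r}) is a product of elementary symplectic matrices. -/
open Matrix

/-- The standard symplectic form `ω_{2r}`: block-diagonal with `r` blocks `((0,1),(−1,0))`. -/
def omSp (r : ℕ) : Matrix (Fin (2 * r)) (Fin (2 * r)) ℤ :=
  Matrix.of fun i j =>
    if ((i : ℕ) + 1 = (j : ℕ) ∧ Even (i : ℕ)) then (1 : ℤ)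
    else if ((j : ℕ) + 1 = (i : ℕ) ∧ Even (j : ℕ)) then -1 else 0

/-- An elementary symplectic matrix (symplectic transvection):
`x ↦ x + c·ω(x,v)·v`, i.e. `1 + c • v (ω v)ᵀ`. -/
def IsElemSp (r : ℕ) (E : Matrix (Fin (2 * r)) (Fin (2 * r)) ℤ) : Prop :=
  ∃ (v : Fin (2 * r) → ℤ) (c : ℤ),
    E = 1 + c • Matrix.vecMulVec v ((omSp r).mulVec v)

/-!
Transvections along vectors `ω`-orthogonal to `e₀, …, e₂ₖ₋₁` fix those basis vectors, and they act
transitively on pairs `(a, b)` with `ω(a, b) = 1` in that orthogonal complement. To move `a` to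
`e = e₂ₖ`, Euclid's algorithm on `(ω(a, f), ω(a, e))`, with `f = e₂ₖ₊₁`, first makes `ω(a, f) = 0`;
then some `z` has `ω(a, z) = ω(z, e) = 1`, and the transvections along `z - a` and `e - z` carry `a`
to `z` to `e`. Two more transvections, fixing `e`, carry the partner of `a` to `f`. Doing this for
the columns `2k, 2k + 1` of a symplectic matrix, for `k = 0, 1, …, r - 1`, reduces it to the
identity.
-/

namespace Sp

section Transvection

variable {n R : Type*} [Fintype n] [CommRing R] {Ω : Matrix n n R}

theorem dotProduct_mulVec_swap (hΩ : ∀ x, x ⬝ᵥ Ω *ᵥ x = 0) (x y : n → R) :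
    y ⬝ᵥ Ω *ᵥ x = -(x ⬝ᵥ Ω *ᵥ y) := by
  have := hΩ (x + y)
  rw [mulVec_add, dotProduct_add, add_dotProduct, add_dotProduct, hΩ x, hΩ y] at this
  linear_combination this

theorem mulVec_dotProduct_mulVec_mulVec (M : Matrix n n R) (x y : n → R) :
    (M *ᵥ x) ⬝ᵥ Ω *ᵥ (M *ᵥ y) = x ⬝ᵥ (Mᵀ * Ω * M) *ᵥ y := by
  rw [← mulVec_mulVec, ← mulVec_mulVec, dotProduct_mulVec x, vecMul_transpose]

variable [DecidableEq n]

theorem single_dotProduct_mulVec_single (A : Matrix n n R) (i j : n) :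
    Pi.single i 1 ⬝ᵥ A *ᵥ Pi.single j 1 = A i j := by
  simp

variable (Ω) in
def symplecticSubmonoid : Submonoid (Matrix n n R) where
  carrier := {M | Mᵀ * Ω * M = Ω}
  mul_mem' {A B} hA hB := by
    change (A * B)ᵀ * Ω * (A * B) = Ω
    rw [transpose_mul, show Bᵀ * Aᵀ * Ω * (A * B) = Bᵀ * (Aᵀ * Ω * A) * B by
      simp only [Matrix.mul_assoc], hA, hB]
  one_mem' := by simp

theorem mem_symplecticSubmonoid_iff {M : Matrix n n R} :
    M ∈ symplecticSubmonoid Ω ↔ ∀ x y, (M *ᵥ x) ⬝ᵥ Ω *ᵥ (M *ᵥ y) = x ⬝ᵥ Ω *ᵥ y := by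
  refine ⟨fun h x y => by rw [mulVec_dotProduct_mulVec_mulVec, show Mᵀ * Ω * M = Ω from h],
    fun h => ?_⟩
  ext i j
  have := h (Pi.single i 1) (Pi.single j 1)
  rwa [mulVec_dotProduct_mulVec_mulVec, single_dotProduct_mulVec_single,
    single_dotProduct_mulVec_single] at this

variable (Ω) in
/-- The transvection `x ↦ x + c ω(x, v) v` of the form `ω(x, y) = xᵀ Ω y`. -/
def symplecticTransvection (v : n → R) (c : R) : Matrix n n R :=
  1 + c • vecMulVec v (Ω *ᵥ v)

theorem symplecticTransvection_mulVec (v : n → R) (c : R) (x : n → R) :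
    symplecticTransvection Ω v c *ᵥ x = x + (c * (x ⬝ᵥ Ω *ᵥ v)) • v := by
  rw [symplecticTransvection, add_mulVec, one_mulVec, smul_mulVec, vecMulVec_mulVec,
    op_smul_eq_smul, smul_smul, dotProduct_comm]

theorem symplecticTransvection_mulVec_dotProduct_mulVec (v : n → R) (c : R) (x y : n → R) :
    (symplecticTransvection Ω v c *ᵥ x) ⬝ᵥ Ω *ᵥ y =
      x ⬝ᵥ Ω *ᵥ y + c * (x ⬝ᵥ Ω *ᵥ v) * (v ⬝ᵥ Ω *ᵥ y) := by
  rw [symplecticTransvection_mulVec, add_dotProduct, smul_dotProduct, smul_eq_mul]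

theorem symplecticTransvection_mulVec_of_dotProduct_mulVec_eq_zero {v x : n → R}
    (h : x ⬝ᵥ Ω *ᵥ v = 0) (c : R) : symplecticTransvection Ω v c *ᵥ x = x := by
  rw [symplecticTransvection_mulVec, h, mul_zero, zero_smul, add_zero]

theorem symplecticTransvection_sub_mulVec (hΩ : ∀ x, x ⬝ᵥ Ω *ᵥ x = 0) {x z : n → R}
    (h : x ⬝ᵥ Ω *ᵥ z = 1) : symplecticTransvection Ω (z - x) 1 *ᵥ x = z := by
  rw [symplecticTransvection_mulVec, mulVec_sub, dotProduct_sub, h, hΩ, sub_zero, one_mul,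
    one_smul, add_sub_cancel]

theorem symplecticTransvection_mem_symplecticSubmonoid (hΩ : ∀ x, x ⬝ᵥ Ω *ᵥ x = 0)
    (v : n → R) (c : R) : symplecticTransvection Ω v c ∈ symplecticSubmonoid Ω := by
  refine mem_symplecticSubmonoid_iff.2 fun x y => ?_
  simp only [symplecticTransvection_mulVec_dotProduct_mulVec, symplecticTransvection_mulVec v c y,
    mulVec_add, mulVec_smul, dotProduct_add, dotProduct_smul, smul_eq_mul, hΩ,
    dotProduct_mulVec_swap hΩ v y]
  ring

theorem symplecticTransvection_neg_mul (hΩ : ∀ x, x ⬝ᵥ Ω *ᵥ x = 0) (v : n → R) (c : R) :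
    symplecticTransvection Ω v (-c) * symplecticTransvection Ω v c = 1 := by
  refine ext_of_mulVec_single fun i => ?_
  rw [← mulVec_mulVec, symplecticTransvection_mulVec v (-c),
    symplecticTransvection_mulVec_dotProduct_mulVec, hΩ, symplecticTransvection_mulVec, one_mulVec]
  simp only [mul_zero, add_zero, neg_mul, neg_smul, add_neg_cancel_right]

variable (Ω) in
def transvectionSubmonoid (S : Submodule R (n → R)) : Submonoid (Matrix n n R) :=
  Submonoid.closure {T | ∃ v ∈ S, ∃ c, symplecticTransvection Ω v c = T}

variable {S : Submodule R (n → R)}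

theorem symplecticTransvection_mem {v : n → R} (hv : v ∈ S) (c : R) :
    symplecticTransvection Ω v c ∈ transvectionSubmonoid Ω S :=
  Submonoid.subset_closure ⟨v, hv, c, rfl⟩

theorem transvectionSubmonoid_mono {S' : Submodule R (n → R)} (h : S ≤ S') :
    transvectionSubmonoid Ω S ≤ transvectionSubmonoid Ω S' :=
  Submonoid.closure_mono fun _ ⟨v, hv, c, hT⟩ => ⟨v, h hv, c, hT⟩

theorem transvectionSubmonoid_le_symplecticSubmonoid (hΩ : ∀ x, x ⬝ᵥ Ω *ᵥ x = 0) :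
    transvectionSubmonoid Ω S ≤ symplecticSubmonoid Ω :=
  Submonoid.closure_le.2 fun _ ⟨v, _, c, hT⟩ =>
    hT ▸ symplecticTransvection_mem_symplecticSubmonoid hΩ v c

theorem mulVec_mem_of_mem_transvectionSubmonoid {T : Matrix n n R}
    (hT : T ∈ transvectionSubmonoid Ω S) {x : n → R} (hx : x ∈ S) : T *ᵥ x ∈ S := by
  induction hT using Submonoid.closure_induction_left with
  | one => rwa [one_mulVec]
  | mul_left _ ht _ _ ih =>
    obtain ⟨v, hv, c, rfl⟩ := ht
    rw [← mulVec_mulVec, symplecticTransvection_mulVec]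
    exact S.add_mem ih (S.smul_mem _ hv)

theorem mulVec_eq_self_of_mem_transvectionSubmonoid {T : Matrix n n R}
    (hT : T ∈ transvectionSubmonoid Ω S) {x : n → R} (hx : ∀ v ∈ S, x ⬝ᵥ Ω *ᵥ v = 0) :
    T *ᵥ x = x := by
  induction hT using Submonoid.closure_induction_left with
  | one => rw [one_mulVec]
  | mul_left _ ht _ _ ih =>
    obtain ⟨v, hv, c, rfl⟩ := ht
    rw [← mulVec_mulVec, ih, symplecticTransvection_mulVec_of_dotProduct_mulVec_eq_zero (hx v hv)]

theorem exists_mul_eq_one_of_mem_transvectionSubmonoid (hΩ : ∀ x, x ⬝ᵥ Ω *ᵥ x = 0)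
    {T : Matrix n n R} (hT : T ∈ transvectionSubmonoid Ω S) :
    ∃ T' ∈ transvectionSubmonoid Ω S, T' * T = 1 := by
  induction hT using Submonoid.closure_induction_left with
  | one => exact ⟨1, one_mem _, one_mul 1⟩
  | mul_left _ ht _ _ ih =>
    obtain ⟨v, hv, c, rfl⟩ := ht
    obtain ⟨T', hT', hT'T⟩ := ih
    refine ⟨T' * symplecticTransvection Ω v (-c),
      mul_mem hT' (symplecticTransvection_mem hv _), ?_⟩
    rw [Matrix.mul_assoc, ← Matrix.mul_assoc (symplecticTransvection Ω v (-c)),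
      symplecticTransvection_neg_mul hΩ, Matrix.one_mul, hT'T]

variable {e f : n → R}

theorem exists_mem_transvectionSubmonoid_mulVec_eq_self_and_eq (hΩ : ∀ x, x ⬝ᵥ Ω *ᵥ x = 0)
    (he : e ∈ S) (hf : f ∈ S) (hef : e ⬝ᵥ Ω *ᵥ f = 1) {b : n → R} (hb : b ∈ S)
    (heb : e ⬝ᵥ Ω *ᵥ b = 1) :
    ∃ T ∈ transvectionSubmonoid Ω S, T *ᵥ e = e ∧ T *ᵥ b = f := by
  -- Shear `b` along `e` until it pairs to `1` with `f`; the transvection along `f - b'` then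
  -- carries `b'` to `f` and fixes `e`.
  set b' := symplecticTransvection Ω e (b ⬝ᵥ Ω *ᵥ f - 1) *ᵥ b
  have hb'f : b' ⬝ᵥ Ω *ᵥ f = 1 := by
    rw [symplecticTransvection_mulVec_dotProduct_mulVec, dotProduct_mulVec_swap hΩ e b, heb, hef]
    ring
  have heb' : e ⬝ᵥ Ω *ᵥ (f - b') = 0 := by
    simp only [b', mulVec_sub, dotProduct_sub, hef, symplecticTransvection_mulVec, mulVec_add,
      mulVec_smul, dotProduct_add, dotProduct_smul, heb, hΩ, smul_zero, add_zero, sub_self]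
  have hb' : b' ∈ S := mulVec_mem_of_mem_transvectionSubmonoid (symplecticTransvection_mem he _) hb
  refine ⟨symplecticTransvection Ω (f - b') 1 * symplecticTransvection Ω e (b ⬝ᵥ Ω *ᵥ f - 1),
    mul_mem (symplecticTransvection_mem (S.sub_mem hf hb') _) (symplecticTransvection_mem he _),
    ?_, ?_⟩
  · rw [← mulVec_mulVec, symplecticTransvection_mulVec_of_dotProduct_mulVec_eq_zero (hΩ e),
      symplecticTransvection_mulVec_of_dotProduct_mulVec_eq_zero heb']
  · rw [← mulVec_mulVec, symplecticTransvection_sub_mulVec hΩ hb'f]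

end Transvection

section Integer

variable {n : Type*} [Fintype n] {Ω : Matrix n n ℤ}

theorem dotProduct_mulVec_self_of_transpose_eq_neg (hΩ : Ωᵀ = -Ω) (x : n → ℤ) :
    x ⬝ᵥ Ω *ᵥ x = 0 := by
  have h : x ⬝ᵥ Ω *ᵥ x = x ⬝ᵥ Ωᵀ *ᵥ x := by
    rw [dotProduct_mulVec, mulVec_transpose, dotProduct_comm]
  rw [hΩ, neg_mulVec, dotProduct_neg] at h
  omega

variable [DecidableEq n] {S : Submodule ℤ (n → ℤ)} {e f : n → ℤ}

theorem exists_mem_transvectionSubmonoid_dotProduct_mulVec_eq_zero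
    (hΩ : ∀ x, x ⬝ᵥ Ω *ᵥ x = 0) (he : e ∈ S) (hf : f ∈ S) (hef : e ⬝ᵥ Ω *ᵥ f = 1) (x : n → ℤ) :
    ∃ T ∈ transvectionSubmonoid Ω S, (T *ᵥ x) ⬝ᵥ Ω *ᵥ f = 0 := by
  have hfe : f ⬝ᵥ Ω *ᵥ e = -1 := by rw [dotProduct_mulVec_swap hΩ, hef]
  induction hm : (x ⬝ᵥ Ω *ᵥ f).natAbs using Nat.strong_induction_on generalizing x with
  | _ m ih =>
    set α := x ⬝ᵥ Ω *ᵥ f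
    rcases eq_or_ne α 0 with hα | hα
    · exact ⟨1, one_mem _, by rwa [one_mulVec]⟩
    -- One step of Euclid's algorithm on `(α, β) = (ω(x, f), ω(x, e))`: replace `β` by its
    -- residue `β'` modulo `α` in `(0, |α|]`, then `α` by `α % β'`.
    set β := x ⬝ᵥ Ω *ᵥ e
    set x₁ := symplecticTransvection Ω f ((β - 1) / α) *ᵥ x
    have hx₁f : x₁ ⬝ᵥ Ω *ᵥ f = α := by
      rw [symplecticTransvection_mulVec_dotProduct_mulVec, hΩ, mul_zero, add_zero]
    have hx₁e : x₁ ⬝ᵥ Ω *ᵥ e = (β - 1) % α + 1 := by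
      rw [symplecticTransvection_mulVec_dotProduct_mulVec, hfe, Int.emod_def]
      ring
    set β' := (β - 1) % α + 1
    set x₂ := symplecticTransvection Ω e (-(α / β')) *ᵥ x₁
    have hx₂f : x₂ ⬝ᵥ Ω *ᵥ f = α % β' := by
      rw [symplecticTransvection_mulVec_dotProduct_mulVec, hx₁f, hx₁e, hef, Int.emod_def α β']
      ring
    have hβ' : 0 < β' ∧ β' ≤ α.natAbs := by
      have := Int.emod_nonneg (β - 1) hα
      have := Int.emod_lt (β - 1) hα
      omega
    have hlt : (x₂ ⬝ᵥ Ω *ᵥ f).natAbs < m := by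
      have := Int.emod_nonneg α hβ'.1.ne'
      have := Int.emod_lt_of_pos α hβ'.1
      omega
    obtain ⟨T, hT, hTx⟩ := ih _ hlt x₂ rfl
    refine ⟨T * symplecticTransvection Ω e (-(α / β')) * symplecticTransvection Ω f ((β - 1) / α),
      mul_mem (mul_mem hT (symplecticTransvection_mem he _)) (symplecticTransvection_mem hf _), ?_⟩
    rwa [← mulVec_mulVec, ← mulVec_mulVec]

theorem exists_mem_transvectionSubmonoid_mulVec_eq (hΩ : ∀ x, x ⬝ᵥ Ω *ᵥ x = 0)
    (he : e ∈ S) (hf : f ∈ S) (hef : e ⬝ᵥ Ω *ᵥ f = 1) {x y : n → ℤ} (hx : x ∈ S) (hy : y ∈ S)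
    (hxy : x ⬝ᵥ Ω *ᵥ y = 1) : ∃ T ∈ transvectionSubmonoid Ω S, T *ᵥ x = e := by
  obtain ⟨T, hT, hTx⟩ := exists_mem_transvectionSubmonoid_dotProduct_mulVec_eq_zero hΩ he hf hef x
  set x' := T *ᵥ x
  set y' := T *ᵥ y
  have hx'y' : x' ⬝ᵥ Ω *ᵥ y' = 1 :=
    (mem_symplecticSubmonoid_iff.1 (transvectionSubmonoid_le_symplecticSubmonoid hΩ hT) x y).trans
      hxy
  set z := y' + (y' ⬝ᵥ Ω *ᵥ e - 1) • f
  have hx'z : x' ⬝ᵥ Ω *ᵥ z = 1 := by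
    rw [mulVec_add, mulVec_smul, dotProduct_add, dotProduct_smul, hx'y', hTx, smul_zero, add_zero]
  have hze : z ⬝ᵥ Ω *ᵥ e = 1 := by
    rw [add_dotProduct, smul_dotProduct, dotProduct_mulVec_swap hΩ e f, hef, smul_eq_mul]
    ring
  have hz : z ∈ S := S.add_mem (mulVec_mem_of_mem_transvectionSubmonoid hT hy) (S.smul_mem _ hf)
  have hx' : x' ∈ S := mulVec_mem_of_mem_transvectionSubmonoid hT hx
  refine ⟨symplecticTransvection Ω (e - z) 1 * symplecticTransvection Ω (z - x') 1 * T,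
    mul_mem (mul_mem (symplecticTransvection_mem (S.sub_mem he hz) _)
      (symplecticTransvection_mem (S.sub_mem hz hx') _)) hT, ?_⟩
  rw [← mulVec_mulVec, ← mulVec_mulVec, symplecticTransvection_sub_mulVec hΩ hx'z,
    symplecticTransvection_sub_mulVec hΩ hze]

theorem exists_mem_transvectionSubmonoid_mulVec_eq_pair (hΩ : ∀ x, x ⬝ᵥ Ω *ᵥ x = 0)
    (he : e ∈ S) (hf : f ∈ S) (hef : e ⬝ᵥ Ω *ᵥ f = 1) {a b : n → ℤ} (ha : a ∈ S) (hb : b ∈ S)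
    (hab : a ⬝ᵥ Ω *ᵥ b = 1) :
    ∃ T ∈ transvectionSubmonoid Ω S, T *ᵥ a = e ∧ T *ᵥ b = f := by
  obtain ⟨T, hT, hTa⟩ := exists_mem_transvectionSubmonoid_mulVec_eq hΩ he hf hef ha hb hab
  have heb : e ⬝ᵥ Ω *ᵥ (T *ᵥ b) = 1 := by
    rw [← hTa, mem_symplecticSubmonoid_iff.1
      (transvectionSubmonoid_le_symplecticSubmonoid hΩ hT), hab]
  obtain ⟨T', hT', hT'e, hT'b⟩ := exists_mem_transvectionSubmonoid_mulVec_eq_self_and_eq hΩ he hf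
    hef (mulVec_mem_of_mem_transvectionSubmonoid hT hb) heb
  exact ⟨T' * T, mul_mem hT' hT, by rw [← mulVec_mulVec, hTa, hT'e], by rw [← mulVec_mulVec, hT'b]⟩

end Integer

section StandardForm

variable {r : ℕ}

theorem omSp_dotProduct_mulVec_self (x : Fin (2 * r) → ℤ) : x ⬝ᵥ omSp r *ᵥ x = 0 := by
  refine dotProduct_mulVec_self_of_transpose_eq_neg ?_ x
  ext i j
  simp only [transpose_apply, neg_apply, omSp, of_apply]
  split_ifs <;> omega

theorem omSp_apply_of_ne {i j : Fin (2 * r)} (h : (i : ℕ) / 2 ≠ (j : ℕ) / 2) : omSp r i j = 0 := by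
  simp only [omSp, of_apply, Nat.even_iff]
  split_ifs <;> omega

theorem omSp_apply_two_mul (k : ℕ) (hk : k < r) :
    omSp r ⟨2 * k, by omega⟩ ⟨2 * k + 1, by omega⟩ = 1 := by
  simp [omSp]

variable (r) in
def orthFirst (k : ℕ) : Submodule ℤ (Fin (2 * r) → ℤ) where
  carrier := {v | ∀ j : Fin (2 * r), (j : ℕ) < 2 * k → Pi.single j 1 ⬝ᵥ omSp r *ᵥ v = 0}
  add_mem' {a b} ha hb j hj := by rw [mulVec_add, dotProduct_add, ha j hj, hb j hj, add_zero]
  zero_mem' := by simp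
  smul_mem' c a ha j hj := by rw [mulVec_smul, dotProduct_smul, ha j hj, smul_zero]

theorem single_mem_orthFirst {k : ℕ} {i : Fin (2 * r)} (hi : 2 * k ≤ i) :
    Pi.single i 1 ∈ orthFirst r k := fun j hj => by
  rw [single_dotProduct_mulVec_single, omSp_apply_of_ne (by omega)]

theorem exists_mul_mulVec_single_eq {k : ℕ} (hk : k < r) {M : Matrix (Fin (2 * r)) (Fin (2 * r)) ℤ}
    (hM : M ∈ symplecticSubmonoid (omSp r))
    (hfix : ∀ j : Fin (2 * r), (j : ℕ) < 2 * k → M *ᵥ Pi.single j 1 = Pi.single j 1) :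
    ∃ T ∈ transvectionSubmonoid (omSp r) (orthFirst r k),
      ∀ j : Fin (2 * r), (j : ℕ) < 2 * (k + 1) → (T * M) *ᵥ Pi.single j 1 = Pi.single j 1 := by
  set i₀ : Fin (2 * r) := ⟨2 * k, by omega⟩
  set i₁ : Fin (2 * r) := ⟨2 * k + 1, by omega⟩
  have hMS : ∀ i : Fin (2 * r), 2 * k ≤ i → M *ᵥ Pi.single i 1 ∈ orthFirst r k :=
    fun i hi j hj => by
      rw [← hfix j hj, mem_symplecticSubmonoid_iff.1 hM]
      exact single_mem_orthFirst hi j hj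
  have hi₀₁ : Pi.single i₀ 1 ⬝ᵥ omSp r *ᵥ Pi.single i₁ 1 = 1 := by
    rw [single_dotProduct_mulVec_single, omSp_apply_two_mul k hk]
  obtain ⟨T, hT, hT₀, hT₁⟩ := exists_mem_transvectionSubmonoid_mulVec_eq_pair
    omSp_dotProduct_mulVec_self (single_mem_orthFirst le_rfl) (single_mem_orthFirst (Nat.le_succ _))
    hi₀₁ (hMS i₀ le_rfl) (hMS i₁ (Nat.le_succ _)) ((mem_symplecticSubmonoid_iff.1 hM _ _).trans hi₀₁)
  refine ⟨T, hT, fun j hj => ?_⟩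
  rw [← mulVec_mulVec]
  rcases lt_or_ge (j : ℕ) (2 * k) with hjk | hjk
  · rw [hfix j hjk]
    exact mulVec_eq_self_of_mem_transvectionSubmonoid hT fun v hv => hv j hjk
  · obtain rfl | rfl : j = i₀ ∨ j = i₁ := by
      rcases Nat.lt_or_ge (j : ℕ) (2 * k + 1) with h | h
      · exact Or.inl (Fin.ext (show (j : ℕ) = 2 * k by omega))
      · exact Or.inr (Fin.ext (show (j : ℕ) = 2 * k + 1 by omega))
    exacts [hT₀, hT₁]

theorem mem_transvectionSubmonoid_of_mulVec_single_eq {k : ℕ} (hk : k ≤ r)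
    {M : Matrix (Fin (2 * r)) (Fin (2 * r)) ℤ} (hM : M ∈ symplecticSubmonoid (omSp r))
    (hfix : ∀ j : Fin (2 * r), (j : ℕ) < 2 * k → M *ᵥ Pi.single j 1 = Pi.single j 1) :
    M ∈ transvectionSubmonoid (omSp r) ⊤ := by
  induction hk using Nat.decreasingInduction generalizing M with
  | self =>
    obtain rfl : M = 1 := ext_of_mulVec_single fun j => by rw [hfix j (by omega), one_mulVec]
    exact one_mem _
  | of_succ k hk ih =>
    obtain ⟨T, hT, hTM⟩ := exists_mul_mulVec_single_eq hk hM hfix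
    obtain ⟨T', hT', hT'T⟩ :=
      exists_mul_eq_one_of_mem_transvectionSubmonoid omSp_dotProduct_mulVec_self hT
    have hTM' := ih (mul_mem (transvectionSubmonoid_le_symplecticSubmonoid
      omSp_dotProduct_mulVec_self hT) hM) hTM
    rw [← Matrix.one_mul M, ← hT'T, Matrix.mul_assoc]
    exact mul_mem (transvectionSubmonoid_mono le_top hT') hTM'

end StandardForm

end Sp

open Sp in
/-- Every matrix in `Sp_{2r}(ℤ)` is a product of elementary symplectic matrices. -/
theorem stmt9 (r : ℕ) (M : Matrix (Fin (2 * r)) (Fin (2 * r)) ℤ)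
    (hM : Mᵀ * omSp r * M = omSp r) :
    ∃ L : List (Matrix (Fin (2 * r)) (Fin (2 * r)) ℤ),
      (∀ E ∈ L, IsElemSp r E) ∧ M = L.prod := by
  obtain ⟨L, hL, hprod⟩ := Submonoid.exists_list_of_mem_closure
    (mem_transvectionSubmonoid_of_mulVec_single_eq (Nat.zero_le r) hM (by simp))
  refine ⟨L, fun E hE => ?_, hprod.symm⟩
  obtain ⟨v, -, c, rfl⟩ := hL E hE
  exact ⟨v, c, rfl⟩
end

section
/- Let R be a commutative graded ring and let I_d ⊆ R[p_1,…,p_r] be the ideal generated by monomials p_1^{a_1}⋯p_r^{a_r} with Σ i·a_i ≥ d, where p_i has weight i. Then for 0 ≤ r ≤ n one has the inclusions I_{r(n−r)+1} ⊆ (h_{n−r+1},…,h_n) ⊆ I_{n−r+1}, where h_j ∈ R[p_1,…,p_r] is defined by the recurrence h_j = Σ_{i=1}^{r}(−1)^{i+1} p_i h_{j−i}, h_0 = 1. -/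
noncomputable section

open MvPolynomial

/-- `h_j` in the ring `R[p_1,…,p_r]` (where `X i` stands for `p_{i+1}`), defined by the
recurrence `h_j = ∑_{i=1}^r (−1)^{i+1} p_i h_{j−i}`, `h_0 = 1`. -/
def hR (R : Type*) [CommRing R] (r : ℕ) : ℕ → MvPolynomial (Fin r) R
  | 0 => 1
  | (j + 1) =>
    ∑ i : Fin r, (-1 : MvPolynomial (Fin r) R) ^ (i : ℕ) *
      (X i * if (i : ℕ) ≤ j then hR R r (j - (i : ℕ)) else 0)
  termination_by j => j
  decreasing_by simp_wf <;> omega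

/-- The ideal `I_d ⊆ R[p_1,…,p_r]` generated by the monomials `p_1^{a_1} ⋯ p_r^{a_r}` of
weight `∑ i·a_i ≥ d`, where `p_i` has weight `i`. -/
def wIdeal (R : Type*) [CommRing R] (r d : ℕ) : Ideal (MvPolynomial (Fin r) R) :=
  Ideal.span { q | ∃ a : Fin r →₀ ℕ,
    d ≤ a.sum (fun i k => ((i : ℕ) + 1) * k) ∧ q = monomial a (1 : R) }

/-!
The upper inclusion holds because `h_j` lies in `I_j`. For the lower one, solving the recurrence
for `p_{i+1}` writes it as an integral polynomial in `h_1, …, h_{i+1}`, so a monomial of weight `w`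
is an integral combination of products `h_{ν_1} ⋯ h_{ν_k}` with `∑ ν = w`. With `m = n - r` and
`J = (h_{m+1}, …, h_{m+r})`, it remains to show that such a product lies in `J` when `w > r m`.
By the recurrence, `h_t ∈ J` for every `t > m`; otherwise all `ν_i ≤ m`, so at least `r + 1` of
them are positive. For `r + 1` of them, sorted increasingly as `μ`, the determinant of
`(h_{μ_j + j - i})` vanishes, because the recurrence makes its first row a combination of the
other `r`. Expanding it writes `h_μ` as a combination of products `h_{μ + id - σ}`, `σ ≠ 1`, of
the same weight and, by the rearrangement inequality, of strictly larger `∑ ν_i²`; since that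
sum is at most `w²`, induction on `w² - ∑ ν_i²` concludes.
-/

open Finset

theorem Multiset.exists_monotone_fin_of_card_eq {α : Type*} [LinearOrder α] {s : Multiset α}
    {ℓ : ℕ} (hs : Multiset.card s = ℓ) :
    ∃ μ : Fin ℓ → α, Monotone μ ∧ (univ : Finset (Fin ℓ)).val.map μ = s := by
  subst hs
  set L := s.sort (· ≤ ·)
  have hL : L.length = Multiset.card s := Multiset.length_sort _
  refine ⟨fun i => L.get (i.cast hL.symm), fun i j hij => ?_, ?_⟩
  · exact (Multiset.pairwise_sort s (· ≤ ·)).rel_get_of_le hij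
  · rw [Fin.univ_val_map]
    conv_rhs => rw [← Multiset.sort_eq s (· ≤ ·)]
    exact congrArg _ (List.ext_get (by simp) fun n _ _ => by simp; rfl)

theorem Multiset.sum_map_sq_le_sq_sum (s : Multiset ℕ) : (s.map (· ^ 2)).sum ≤ s.sum ^ 2 := by
  induction s using Multiset.induction with
  | empty => simp
  | cons a s ih =>
    simp only [Multiset.map_cons, Multiset.sum_cons]
    nlinarith [Nat.zero_le (a * s.sum)]

theorem Multiset.exists_le_card_eq_pos_of_mul_lt_sum {s : Multiset ℕ} {m r : ℕ}
    (hs : ∀ x ∈ s, x ≤ m) (hsum : r * m < s.sum) :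
    ∃ t ≤ s, Multiset.card t = r + 1 ∧ ∀ x ∈ t, 0 < x := by
  set P := s.filter (0 < ·)
  have hP : P.sum = s.sum := by
    conv_rhs => rw [← Multiset.filter_add_not (0 < ·) s]
    rw [Multiset.sum_add, Multiset.sum_eq_zero (s := s.filter (¬ 0 < ·)) (fun x hx => by
      have := (Multiset.mem_filter.mp hx).2; omega), add_zero]
  have hcard : r + 1 ≤ Multiset.card P := by
    by_contra! h
    have : P.sum ≤ Multiset.card P * m := by
      simpa using Multiset.sum_le_card_nsmul P m fun x hx => hs x (Multiset.mem_of_mem_filter hx)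
    have : Multiset.card P * m ≤ r * m := Nat.mul_le_mul_right _ (by omega)
    omega
  obtain ⟨t, ht⟩ := Multiset.card_pos_iff_exists_mem.mp
    (by rw [Multiset.card_powersetCard]; exact Nat.choose_pos hcard :
      0 < Multiset.card (Multiset.powersetCard (r + 1) P))
  obtain ⟨htP, htc⟩ := Multiset.mem_powersetCard.mp ht
  exact ⟨t, htP.trans (Multiset.filter_le _ s), htc,
    fun x hx => (Multiset.mem_filter.mp (Multiset.mem_of_le htP hx)).2⟩

theorem Fin.sum_sq_lt_sum_sq_add_sub_perm {ℓ : ℕ} {μ : Fin ℓ → ℤ} (hμ : Monotone μ)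
    {σ : Equiv.Perm (Fin ℓ)} (hσ : σ ≠ 1) :
    ∑ i, μ i ^ 2 < ∑ i, (μ i + (i : ℤ) - (σ i : ℤ)) ^ 2 := by
  have hrearr : ∑ i, μ i * (σ i : ℤ) ≤ ∑ i, μ i * (i : ℤ) :=
    Monovary.sum_mul_comp_perm_le_sum_mul (f := μ) (g := fun i : Fin ℓ => (i : ℤ))
      fun i j hij => hμ (by simpa using hij.le)
  obtain ⟨i₀, hi₀⟩ : ∃ i, σ i ≠ i := by
    by_contra! h
    exact hσ (Equiv.ext h)
  have hpos : 0 < ∑ i : Fin ℓ, ((i : ℤ) - σ i) ^ 2 := by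
    refine lt_of_lt_of_le ?_ (single_le_sum (fun (i : Fin ℓ) _ => sq_nonneg ((i : ℤ) - σ i))
      (mem_univ i₀))
    exact sq_pos_of_ne_zero (sub_ne_zero.mpr fun h => hi₀ (Fin.ext (by exact_mod_cast h.symm)))
  have hexpand : ∑ i, (μ i + (i : ℤ) - (σ i : ℤ)) ^ 2 =
      ∑ i, μ i ^ 2 + 2 * (∑ i, μ i * (i : ℤ) - ∑ i, μ i * (σ i : ℤ)) +
        ∑ i : Fin ℓ, ((i : ℤ) - σ i) ^ 2 := by
    simp only [mul_sum, ← sum_sub_distrib, ← sum_add_distrib]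
    exact sum_congr rfl fun i _ => by ring
  linarith

theorem Fin.sum_sq_lt_sum_sq_add_tsub_perm {ℓ : ℕ} {μ : Fin ℓ → ℕ} (hμ : Monotone μ)
    {σ : Equiv.Perm (Fin ℓ)} (hσ : σ ≠ 1) (h : ∀ i, (σ i : ℕ) ≤ μ i + i) :
    ∑ i, μ i ^ 2 < ∑ i, (μ i + i - σ i) ^ 2 := by
  have hcast : ∀ i, ((μ i + i - σ i : ℕ) : ℤ) = μ i + i - σ i := fun i => by
    rw [Nat.cast_sub (h i)]; push_cast; ring
  rw [← Nat.cast_lt (α := ℤ)]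
  simpa only [Nat.cast_sum, Nat.cast_pow, hcast] using
    Fin.sum_sq_lt_sum_sq_add_sub_perm (μ := fun i => (μ i : ℤ))
      (fun i j hij => Int.ofNat_le.mpr (hμ hij)) hσ

theorem Fin.sum_add_tsub_perm {ℓ : ℕ} (μ : Fin ℓ → ℕ) (σ : Equiv.Perm (Fin ℓ))
    (h : ∀ i, (σ i : ℕ) ≤ μ i + i) : ∑ i, (μ i + i - σ i) = ∑ i, μ i := by
  apply Nat.cast_injective (R := ℤ)
  push_cast [Nat.cast_sub (h _)]
  rw [sum_sub_distrib, sum_add_distrib, Equiv.sum_comp σ (fun i => ((i : ℕ) : ℤ))]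
  ring

section

variable (R : Type*) [CommRing R] {r : ℕ}

theorem hR_zero : hR R r 0 = 1 := by rw [hR]

theorem hR_succ (j : ℕ) : hR R r (j + 1) = ∑ i : Fin r, (-1 : MvPolynomial (Fin r) R) ^ (i : ℕ) *
    (X i * if (i : ℕ) ≤ j then hR R r (j - i) else 0) := by
  rw [hR]

theorem hR_mem_span_of_lt {m t : ℕ} (ht : m < t) :
    hR R r t ∈ Ideal.span (hR R r '' Set.Icc (m + 1) (m + r)) := by
  induction t using Nat.strong_induction_on with
  | _ t ih =>
    by_cases htr : t ≤ m + r
    · exact Ideal.subset_span ⟨t, ⟨ht, htr⟩, rfl⟩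
    obtain ⟨j, rfl⟩ : ∃ j, t = j + 1 := ⟨t - 1, by omega⟩
    rw [hR_succ]
    refine Ideal.sum_mem _ fun i _ => ?_
    have hi := i.isLt
    rw [if_pos (by omega)]
    exact Ideal.mul_mem_left _ _ (Ideal.mul_mem_left _ _ (ih _ (by omega) (by omega)))

theorem wIdeal_antitone : Antitone (wIdeal R r) := by
  intro d d' h
  rw [wIdeal, Ideal.span_le]
  rintro q ⟨a, ha, rfl⟩
  exact Ideal.subset_span ⟨a, h.trans ha, rfl⟩

theorem X_mul_mem_wIdeal {d : ℕ} (i : Fin r) {q : MvPolynomial (Fin r) R}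
    (hq : q ∈ wIdeal R r d) : X i * q ∈ wIdeal R r (d + i + 1) := by
  induction hq using Submodule.span_induction with
  | mem x hx =>
    obtain ⟨a, ha, rfl⟩ := hx
    refine Ideal.subset_span ⟨a + Finsupp.single i 1, ?_, ?_⟩
    · rw [Finsupp.sum_add_index' (by simp) (by intros; ring), Finsupp.sum_single_index (by simp)]
      omega
    · rw [X, monomial_mul, mul_one, add_comm]
  | zero => simp
  | add x y _ _ hx hy => rw [mul_add]; exact add_mem hx hy
  | smul c x _ hx => rw [smul_eq_mul, mul_left_comm]; exact Ideal.mul_mem_left _ _ hx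

theorem hR_mem_wIdeal (t : ℕ) : hR R r t ∈ wIdeal R r t := by
  induction t using Nat.strong_induction_on with
  | _ t ih =>
    rcases t with _ | j
    · exact Ideal.subset_span ⟨0, by simp, by simp [hR_zero]⟩
    rw [hR_succ]
    refine Ideal.sum_mem _ fun i _ => Ideal.mul_mem_left _ _ ?_
    split_ifs with hij
    · simpa [show j - i + i + 1 = j + 1 by omega] using X_mul_mem_wIdeal R i (ih (j - i) (by omega))
    · simp

theorem span_hR_le_wIdeal (m : ℕ) :
    Ideal.span (hR R r '' Set.Icc (m + 1) (m + r)) ≤ wIdeal R r (m + 1) := by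
  rw [Ideal.span_le]
  rintro _ ⟨t, ⟨ht, -⟩, rfl⟩
  exact wIdeal_antitone R ht (hR_mem_wIdeal R t)

def jacobiTrudiMatrix (μ : Fin (r + 1) → ℕ) :
    Matrix (Fin (r + 1)) (Fin (r + 1)) (MvPolynomial (Fin r) R) :=
  Matrix.of fun i j => if (i : ℕ) ≤ μ j + j then hR R r (μ j + j - i) else 0

theorem det_jacobiTrudiMatrix_eq_zero {μ : Fin (r + 1) → ℕ} (hμ : 0 < μ 0) :
    (jacobiTrudiMatrix R μ).det = 0 := by
  set M := jacobiTrudiMatrix R μ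
  set c : Fin (r + 1) → MvPolynomial (Fin r) R := Fin.cons 0 fun k => (-1) ^ (k : ℕ) * X k
  have hrow : M 0 = ∑ k, c k • M k := by
    ext j
    obtain ⟨s, hs⟩ : ∃ s, μ j + j = s + 1 :=
      ⟨μ j + j - 1, by rcases Fin.eq_zero_or_eq_succ j with rfl | ⟨k, rfl⟩ <;> simp <;> omega⟩
    simp [M, jacobiTrudiMatrix, Fin.sum_univ_succ, c, hs, hR_succ, mul_assoc]
  calc M.det = (M.updateRow 0 (∑ k, c k • M k)).det := by rw [← hrow, Matrix.updateRow_eq_self]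
    _ = c 0 • M.det := Matrix.det_updateRow_sum _ _ _
    _ = 0 := by simp [c]

theorem prod_hR_eq_neg_sum {μ : Fin (r + 1) → ℕ} (hμ : 0 < μ 0) :
    ∏ i, hR R r (μ i) =
      -∑ σ ∈ univ.erase 1, Equiv.Perm.sign σ • ∏ i, jacobiTrudiMatrix R μ (σ i) i := by
  have h := det_jacobiTrudiMatrix_eq_zero R hμ
  rw [Matrix.det_apply, ← add_sum_erase _ _ (mem_univ 1)] at h
  have hdiag : Equiv.Perm.sign (1 : Equiv.Perm (Fin (r + 1))) •
      ∏ i, jacobiTrudiMatrix R μ ((1 : Equiv.Perm (Fin (r + 1))) i) i = ∏ i, hR R r (μ i) := by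
    simp [jacobiTrudiMatrix]
  rw [hdiag] at h
  exact eq_neg_of_add_eq_zero_left h

theorem prod_hR_mem_span {m : ℕ} (ν : Multiset ℕ) (hν : r * m < ν.sum) :
    (ν.map (hR R r)).prod ∈ Ideal.span (hR R r '' Set.Icc (m + 1) (m + r)) := by
  induction hd : ν.sum ^ 2 - (ν.map (· ^ 2)).sum using Nat.strong_induction_on generalizing ν with
  | _ d ih =>
  by_cases hbig : ∃ x ∈ ν, m < x
  · obtain ⟨x, hx, hmx⟩ := hbig
    rw [← Multiset.cons_erase hx, Multiset.map_cons, Multiset.prod_cons]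
    exact Ideal.mul_mem_right _ _ (hR_mem_span_of_lt R hmx)
  push Not at hbig
  obtain ⟨ν₁, hle, hcard, hpos⟩ := Multiset.exists_le_card_eq_pos_of_mul_lt_sum hbig hν
  obtain ⟨μ, hmono, rfl⟩ := Multiset.exists_monotone_fin_of_card_eq hcard
  obtain ⟨ν₂, rfl⟩ := Multiset.le_iff_exists_add.mp hle
  have hμ : 0 < μ 0 := hpos _ (Multiset.mem_map_of_mem _ (mem_val.mpr (mem_univ 0)))
  rw [Multiset.map_add, Multiset.prod_add, Multiset.map_map, Function.comp_def, prod_map_val,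
    prod_hR_eq_neg_sum R hμ, neg_mul, sum_mul]
  refine neg_mem (Ideal.sum_mem _ fun σ hσ => ?_)
  rw [smul_mul_assoc, Units.smul_def, zsmul_eq_mul]
  refine Ideal.mul_mem_left _ _ ?_
  by_cases hall : ∀ i, (σ i : ℕ) ≤ μ i + i
  swap
  · obtain ⟨i, hi⟩ := not_forall.mp hall
    rw [prod_eq_zero (mem_univ i) (by simp [jacobiTrudiMatrix, hi]), zero_mul]
    exact zero_mem _
  set ν₁' := univ.val.map fun i => μ i + i - σ i
  have hterm : ∏ i, jacobiTrudiMatrix R μ (σ i) i = (ν₁'.map (hR R r)).prod := by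
    simp only [ν₁', jacobiTrudiMatrix, Matrix.of_apply, hall, if_true, Multiset.map_map,
      Function.comp_def, prod_map_val]
  have hsum : ν₁'.sum = (univ.val.map μ).sum := by
    simp only [ν₁', sum_map_val, Fin.sum_add_tsub_perm μ σ hall]
  have hsq : ((univ.val.map μ).map (· ^ 2)).sum < (ν₁'.map (· ^ 2)).sum := by
    simpa only [ν₁', Multiset.map_map, Function.comp_def, sum_map_val] using
      Fin.sum_sq_lt_sum_sq_add_tsub_perm hmono (ne_of_mem_erase hσ) hall
  rw [hterm, ← Multiset.prod_add, ← Multiset.map_add]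
  refine ih _ ?_ _ (by rwa [Multiset.sum_add, hsum, ← Multiset.sum_add]) rfl
  have := Multiset.sum_map_sq_le_sq_sum (ν₁' + ν₂)
  rw [← hd]
  simp only [Multiset.sum_add, Multiset.map_add, hsum] at this ⊢
  omega

variable (r) in
def hProdSpan (w : ℕ) : Submodule ℤ (MvPolynomial (Fin r) R) :=
  Submodule.span ℤ {q | ∃ ν : Multiset ℕ, ν.sum = w ∧ q = (ν.map (hR R r)).prod}

instance : SetLike.GradedMonoid (hProdSpan R r) where
  one_mem := Submodule.subset_span ⟨0, rfl, by simp⟩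
  mul_mem w w' a b ha hb := by
    have hab := Submodule.mul_mem_mul ha hb
    rw [hProdSpan, hProdSpan, Submodule.span_mul_span] at hab
    refine Submodule.span_mono ?_ hab
    rintro _ ⟨_, ⟨ν, rfl, rfl⟩, _, ⟨ν', rfl, rfl⟩, rfl⟩
    exact ⟨ν + ν', Multiset.sum_add _ _, by rw [Multiset.map_add, Multiset.prod_add]⟩

theorem hR_mem_hProdSpan (t : ℕ) : hR R r t ∈ hProdSpan R r t :=
  Submodule.subset_span ⟨{t}, by simp, by simp⟩

theorem neg_one_pow_mul_mem_hProdSpan {w : ℕ} (j : ℕ) {q : MvPolynomial (Fin r) R}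
    (hq : q ∈ hProdSpan R r w) : (-1) ^ j * q ∈ hProdSpan R r w := by
  rcases neg_one_pow_eq_or (MvPolynomial (Fin r) R) j with h | h <;> simp [h, hq]

theorem X_mem_hProdSpan (i : Fin r) : X i ∈ hProdSpan R r (i + 1) := by
  induction i using WellFoundedLT.induction with
  | _ i ih =>
  have hsplit := hR_succ R (r := r) i
  rw [← add_sum_erase _ _ (mem_univ i), if_pos le_rfl, Nat.sub_self, hR_zero, mul_one] at hsplit
  have hrest : ∑ k ∈ univ.erase i, (-1) ^ (k : ℕ) *
      (X k * if (k : ℕ) ≤ i then hR R r (i - k) else 0) ∈ hProdSpan R r (i + 1) := by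
    refine sum_mem fun k hk => neg_one_pow_mul_mem_hProdSpan R k ?_
    split_ifs with hki
    · have hlt : k < i := lt_of_le_of_ne hki (ne_of_mem_erase hk)
      simpa [show (k : ℕ) + 1 + (i - k) = i + 1 by omega] using
        SetLike.mul_mem_graded (ih k hlt) (hR_mem_hProdSpan R (i - k))
    · simp
  have hsigned : (-1) ^ (i : ℕ) * X i ∈ hProdSpan R r (i + 1) := by
    rw [eq_sub_of_add_eq hsplit.symm]
    exact sub_mem (hR_mem_hProdSpan R _) hrest
  simpa [← mul_assoc, ← pow_add] using neg_one_pow_mul_mem_hProdSpan R i hsigned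

theorem monomial_mem_hProdSpan (a : Fin r →₀ ℕ) :
    monomial a (1 : R) ∈ hProdSpan R r (a.sum fun i k => ((i : ℕ) + 1) * k) := by
  rw [monomial_eq, C_1, one_mul, Finsupp.prod, Finsupp.sum]
  simpa [mul_comm] using SetLike.prod_pow_mem_graded (hProdSpan R r) (fun i : Fin r => (i : ℕ) + 1)
    (fun i => (X i : MvPolynomial (Fin r) R)) a (F := a.support) fun i _ => X_mem_hProdSpan R i

theorem wIdeal_le_span_hR (m : ℕ) :
    wIdeal R r (r * m + 1) ≤ Ideal.span (hR R r '' Set.Icc (m + 1) (m + r)) := by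
  rw [wIdeal, Ideal.span_le]
  rintro _ ⟨a, ha, rfl⟩
  have hle : hProdSpan R r (a.sum fun i k => ((i : ℕ) + 1) * k) ≤
      (Ideal.span (hR R r '' Set.Icc (m + 1) (m + r))).restrictScalars ℤ :=
    Submodule.span_le.mpr fun _ ⟨ν, hν, hq⟩ => hq ▸ prod_hR_mem_span R ν (by omega)
  exact hle (monomial_mem_hProdSpan R a)

end

/-- The inclusions `I_{r(n−r)+1} ⊆ (h_{n−r+1},…,h_n) ⊆ I_{n−r+1}`. -/
theorem stmt14 (R : Type*) [CommRing R] (r n : ℕ) (hrn : r ≤ n) :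
    wIdeal R r (r * (n - r) + 1) ≤ Ideal.span (hR R r '' Set.Icc (n - r + 1) n) ∧
    Ideal.span (hR R r '' Set.Icc (n - r + 1) n) ≤ wIdeal R r (n - r + 1) := by
  obtain ⟨m, rfl⟩ := Nat.exists_eq_add_of_le' hrn
  rw [Nat.add_sub_cancel]
  exact ⟨wIdeal_le_span_hR R m, span_hR_le_wIdeal R m⟩
end
end

section
/- Let R be a commutative ring. The ring homomorphism R[[p_1,…,p_{r+s}]] → R[[p'_1,…,p'_r, p''_1,…,p''_s]] determined by the Cartan formula p_i ↦ p'_i + Σ_{j=1}^{i−1} p'_{i−j} p''_j + p''_i (with p'_k = 0 for k > r and p''_k = 0 for k > s) is injective. -/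
/-!
Substituting the Cartan polynomials `p_i ↦ cartan i` respects the grading in which `p_i`, `p'_i`
and `p''_i` have weight `i`, and the map of power series is its coefficientwise extension. Sending
`p'_k` and `p''_k` to the elementary symmetric functions of `t_1, …, t_r` and of
`t_{r+1}, …, t_{r+s}` turns `cartan i` into `e_{i+1}(t_1, …, t_{r+s})` (elementary symmetric
functions of a disjoint union are a convolution), so by the fundamental theorem on symmetric
polynomials the polynomial substitution is injective. The weight-`w` part of a power series in the
kernel is a polynomial whose image has vanishing weight-`w` component, i.e. vanishes, so it is zero.
-/

noncomputable section

open MvPolynomial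

/-- `p'_k` in `R[p'_1,…,p'_r, p''_1,…,p''_s]`, with `p'_0 = 1` and `p'_k = 0` for `k > r`. -/
def pOne (R : Type*) [CommRing R] (r s : ℕ) (k : ℕ) : MvPolynomial (Fin r ⊕ Fin s) R :=
  if k = 0 then 1
  else if h : k - 1 < r then X (Sum.inl ⟨k - 1, h⟩) else 0

/-- `p''_k` in `R[p'_1,…,p'_r, p''_1,…,p''_s]`, with `p''_0 = 1` and `p''_k = 0` for `k > s`. -/
def pTwo (R : Type*) [CommRing R] (r s : ℕ) (k : ℕ) : MvPolynomial (Fin r ⊕ Fin s) R :=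
  if k = 0 then 1
  else if h : k - 1 < s then X (Sum.inr ⟨k - 1, h⟩) else 0

/-- The Cartan polynomial: the image of `p_{i+1}`, namely
`∑_{j=0}^{i+1} p'_{i+1−j} p''_j = p'_{i+1} + ∑_{j=1}^{i} p'_{i+1−j} p''_j + p''_{i+1}`. -/
def cartan (R : Type*) [CommRing R] (r s : ℕ) (i : Fin (r + s)) :
    MvPolynomial (Fin r ⊕ Fin s) R :=
  ∑ j ∈ Finset.range ((i : ℕ) + 2), pOne R r s ((i : ℕ) + 1 - j) * pTwo R r s j

/-- The weight of an exponent in the target variables (`p'_i` and `p''_i` have weight `i`). -/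
def wtCod (r s : ℕ) (e : (Fin r ⊕ Fin s) →₀ ℕ) : ℕ :=
  e.sum fun x k => (Sum.elim (fun j : Fin r => (j : ℕ) + 1) (fun j : Fin s => (j : ℕ) + 1) x) * k

/-- A bound on the exponents of the source that can contribute to a given target exponent. -/
def bnd (r s : ℕ) (e : (Fin r ⊕ Fin s) →₀ ℕ) : Fin (r + s) →₀ ℕ :=
  Finsupp.equivFunOnFinite.symm fun _ => wtCod r s e

namespace Multiset

variable {A : Type*} [CommSemiring A]

theorem esymm_zero (s : Multiset A) : s.esymm 0 = 1 := by
  simp [esymm, powersetCard_zero_left]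

theorem esymm_eq_zero_of_card_lt {s : Multiset A} {n : ℕ} (h : card s < n) : s.esymm n = 0 := by
  simp [esymm, powersetCard_eq_empty _ h]

theorem esymm_cons_succ (a : A) (s : Multiset A) (n : ℕ) :
    (a ::ₘ s).esymm (n + 1) = s.esymm (n + 1) + a * s.esymm n := by
  simp [esymm, powersetCard_cons, map_map, sum_map_mul_left]

theorem esymm_add (s t : Multiset A) (n : ℕ) :
    (s + t).esymm n = ∑ j ∈ Finset.range (n + 1), s.esymm (n - j) * t.esymm j := by
  induction s using Multiset.induction generalizing n with
  | empty =>
    rw [zero_add, Finset.sum_eq_single_of_mem n (Finset.self_mem_range_succ n)]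
    · rw [Nat.sub_self, esymm_zero, one_mul]
    · intro j hj hjn
      rw [Finset.mem_range] at hj
      rw [esymm_eq_zero_of_card_lt (by simp; omega), zero_mul]
  | cons a s ih =>
    cases n with
    | zero => simp [esymm_zero]
    | succ m =>
      have hsucc : ∀ j ∈ Finset.range (m + 1), (a ::ₘ s).esymm (m + 1 - j) * t.esymm j
          = s.esymm (m + 1 - j) * t.esymm j + a * (s.esymm (m - j) * t.esymm j) := by
        intro j hj
        rw [Nat.sub_add_comm (Finset.mem_range_succ_iff.mp hj), esymm_cons_succ]
        ring
      rw [cons_add, esymm_cons_succ, ih, ih, Finset.sum_range_succ _ (m + 1),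
        Finset.sum_range_succ _ (m + 1), Finset.sum_congr rfl hsucc, Finset.sum_add_distrib,
        ← Finset.mul_sum]
      simp only [Nat.sub_self, esymm_zero, one_mul]
      ring

end Multiset

namespace MvPolynomial

variable {R σ τ M : Type*} [CommSemiring R] [AddCommMonoid M]

theorem coeff_aeval_truncFinset [Fintype σ] [DecidableEq σ] (f : σ → MvPolynomial τ R)
    (S : Finset (σ →₀ ℕ)) (H : MvPowerSeries σ R) (e : τ →₀ ℕ) :
    coeff e (aeval f (MvPowerSeries.truncFinset R S H)) =
      ∑ d ∈ S, MvPowerSeries.coeff d H * coeff e (∏ i, f i ^ d i) := by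
  simp only [MvPowerSeries.truncFinset_apply, map_sum, aeval_monomial, coeff_sum, algebraMap_eq,
    coeff_C_mul, Finsupp.prod_fintype _ _ fun i => pow_zero (f i)]

theorem isWeightedHomogeneous_aeval_monomial {w : σ → M} {w' : τ → M}
    {f : σ → MvPolynomial τ R} (hf : ∀ i, IsWeightedHomogeneous w' (f i) (w i))
    (d : σ →₀ ℕ) (c : R) :
    IsWeightedHomogeneous w' (aeval f (monomial d c)) (Finsupp.weight w d) := by
  rw [aeval_monomial, Finsupp.weight_apply, algebraMap_eq]
  exact (IsWeightedHomogeneous.prod _ _ _ fun i _ => (hf i).pow (d i)).C_mul c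

theorem weightedHomogeneousComponent_aeval {w : σ → M} {w' : τ → M}
    {f : σ → MvPolynomial τ R} (hf : ∀ i, IsWeightedHomogeneous w' (f i) (w i)) (n : M)
    (p : MvPolynomial σ R) :
    weightedHomogeneousComponent w' n (aeval f p) =
      aeval f (weightedHomogeneousComponent w n p) := by
  classical
  induction p using MvPolynomial.induction_on' with
  | monomial d c =>
    rw [weightedHomogeneousComponent_of_mem (isWeightedHomogeneous_aeval_monomial hf d c),
      weightedHomogeneousComponent_of_mem (isWeightedHomogeneous_monomial w d c rfl)]
    split_ifs <;> simp
  | add p q hp hq => simp only [map_add, hp, hq]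

end MvPolynomial

namespace Cartan

variable (R : Type*) [CommRing R] (r s : ℕ)

def sourceWeight : Fin (r + s) → ℕ := fun i => i + 1

def targetWeight : Fin r ⊕ Fin s → ℕ := Sum.elim (fun j => j + 1) (fun j => j + 1)

theorem wtCod_eq_weight (e : (Fin r ⊕ Fin s) →₀ ℕ) :
    wtCod r s e = Finsupp.weight (targetWeight r s) e := by
  rw [Finsupp.weight_apply, wtCod]
  exact Finsupp.sum_congr fun x _ => mul_comm _ _

theorem isWeightedHomogeneous_pOne (k : ℕ) :
    IsWeightedHomogeneous (targetWeight r s) (pOne R r s k) k := by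
  unfold pOne
  split_ifs with hk hkr
  · exact hk ▸ isWeightedHomogeneous_one R _
  · convert isWeightedHomogeneous_X R (targetWeight r s) (Sum.inl (⟨k - 1, hkr⟩ : Fin r))
    simp only [targetWeight, Sum.elim_inl]
    omega
  · exact isWeightedHomogeneous_zero R _ _

theorem isWeightedHomogeneous_pTwo (k : ℕ) :
    IsWeightedHomogeneous (targetWeight r s) (pTwo R r s k) k := by
  unfold pTwo
  split_ifs with hk hks
  · exact hk ▸ isWeightedHomogeneous_one R _
  · convert isWeightedHomogeneous_X R (targetWeight r s) (Sum.inr (⟨k - 1, hks⟩ : Fin s))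
    simp only [targetWeight, Sum.elim_inr]
    omega
  · exact isWeightedHomogeneous_zero R _ _

theorem isWeightedHomogeneous_cartan (i : Fin (r + s)) :
    IsWeightedHomogeneous (targetWeight r s) (cartan R r s i) (sourceWeight r s i) := by
  refine IsWeightedHomogeneous.sum _ _ _ fun j hj => ?_
  convert (isWeightedHomogeneous_pOne R r s _).mul (isWeightedHomogeneous_pTwo R r s j)
  simp only [sourceWeight]
  have := Finset.mem_range.mp hj
  omega

def lowerVars : Multiset (MvPolynomial (Fin (r + s)) R) :=
  Finset.univ.val.map fun t : Fin r => X (Fin.castAdd s t)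

def upperVars : Multiset (MvPolynomial (Fin (r + s)) R) :=
  Finset.univ.val.map fun t : Fin s => X (Fin.natAdd r t)

theorem lowerVars_add_upperVars :
    lowerVars R r s + upperVars R r s = Finset.univ.val.map X := by
  rw [lowerVars, upperVars, Fin.univ_val_map, Fin.univ_val_map, Fin.univ_val_map, List.ofFn_add,
    Multiset.coe_add]
  rfl

/-- `p'_k ↦ e_k(t_1, …, t_r)` and `p''_k ↦ e_k(t_{r+1}, …, t_{r+s})`. -/
def esymmSplit : MvPolynomial (Fin r ⊕ Fin s) R →ₐ[R] MvPolynomial (Fin (r + s)) R :=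
  aeval (Sum.elim (fun j => (lowerVars R r s).esymm (j + 1))
    (fun j => (upperVars R r s).esymm (j + 1)))

theorem esymmSplit_pOne (k : ℕ) :
    esymmSplit R r s (pOne R r s k) = (lowerVars R r s).esymm k := by
  unfold pOne
  split_ifs with hk hkr
  · rw [hk, map_one, Multiset.esymm_zero]
  · rw [esymmSplit, aeval_X, Sum.elim_inl, Nat.sub_add_cancel (Nat.pos_of_ne_zero hk)]
  · rw [map_zero, Multiset.esymm_eq_zero_of_card_lt (by simp [lowerVars]; omega)]

theorem esymmSplit_pTwo (k : ℕ) :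
    esymmSplit R r s (pTwo R r s k) = (upperVars R r s).esymm k := by
  unfold pTwo
  split_ifs with hk hks
  · rw [hk, map_one, Multiset.esymm_zero]
  · rw [esymmSplit, aeval_X, Sum.elim_inr, Nat.sub_add_cancel (Nat.pos_of_ne_zero hk)]
  · rw [map_zero, Multiset.esymm_eq_zero_of_card_lt (by simp [upperVars]; omega)]

theorem esymmSplit_cartan (i : Fin (r + s)) :
    esymmSplit R r s (cartan R r s i) = esymm (Fin (r + s)) R (i + 1) := by
  simp only [cartan, map_sum, map_mul, esymmSplit_pOne, esymmSplit_pTwo]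
  rw [← Multiset.esymm_add, lowerVars_add_upperVars, esymm_eq_multiset_esymm]

theorem aeval_cartan_injective : Function.Injective (aeval (R := R) (cartan R r s)) := by
  have hcomp : (esymmSplit R r s).comp (aeval (R := R) (cartan R r s)) =
      (symmetricSubalgebra (Fin (r + s)) R).val.comp (esymmAlgHom (Fin (r + s)) R (r + s)) := by
    ext i
    simp [esymmSplit_cartan, esymmAlgHom_apply]
  refine .of_comp (f := esymmSplit R r s) ?_
  rw [← AlgHom.coe_comp, hcomp, AlgHom.coe_comp]
  exact Subtype.val_injective.comp (esymmAlgHom_fin_injective R le_rfl)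

variable {R r s}

theorem eq_zero_of_forall_sum_coeff_mul_coeff_prod_cartan_eq_zero
    (H : MvPowerSeries (Fin (r + s)) R)
    (hH : ∀ e, ∑ d ∈ Finset.Iic (bnd r s e),
      MvPowerSeries.coeff d H * coeff e (∏ i, cartan R r s i ^ d i) = 0) :
    H = 0 := by
  ext d₀
  set w := Finsupp.weight (sourceWeight r s) d₀
  set b : Fin (r + s) →₀ ℕ := Finsupp.equivFunOnFinite.symm fun _ => w
  set P := MvPowerSeries.truncFinset R (Finset.Iic b) H
  have hcomponent :
      weightedHomogeneousComponent (targetWeight r s) w (aeval (cartan R r s) P) = 0 := by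
    ext e
    rw [coeff_weightedHomogeneousComponent, coeff_zero]
    split_ifs with he
    · have hb : bnd r s e = b := by rw [bnd, wtCod_eq_weight, he]
      rw [coeff_aeval_truncFinset, ← hb, hH e]
    · rfl
  rw [weightedHomogeneousComponent_aeval (isWeightedHomogeneous_cartan R r s),
    map_eq_zero_iff _ (aeval_cartan_injective R r s)] at hcomponent
  have hd₀b : d₀ ≤ b := fun i =>
    Finsupp.le_weight (sourceWeight r s) (Nat.succ_ne_zero i) d₀
  have hd₀ := congrArg (coeff d₀) hcomponent
  rwa [coeff_weightedHomogeneousComponent, if_pos rfl,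
    MvPowerSeries.coeff_truncFinset_of_mem _ (Finset.mem_Iic.mpr hd₀b)] at hd₀

end Cartan

/-- The ring homomorphism `R[[p_1,…,p_{r+s}]] → R[[p'_1,…,p'_r, p''_1,…,p''_s]]`
determined by the Cartan formula `p_i ↦ p'_i + ∑_{j=1}^{i−1} p'_{i−j} p''_j + p''_i`
(expressed coefficientwise via substitution of the Cartan polynomials) is injective. -/
theorem stmt16 (R : Type*) [CommRing R] (r s : ℕ)
    (F : MvPowerSeries (Fin (r + s)) R →+* MvPowerSeries (Fin r ⊕ Fin s) R)
    (hF : ∀ (G : MvPowerSeries (Fin (r + s)) R) (e : (Fin r ⊕ Fin s) →₀ ℕ),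
      MvPowerSeries.coeff e (F G) =
        ∑ d ∈ Finset.Iic (bnd r s e),
          MvPowerSeries.coeff d G *
            MvPolynomial.coeff e (∏ i : Fin (r + s), cartan R r s i ^ d i)) :
    Function.Injective F := by
  refine (injective_iff_map_eq_zero F).mpr fun H hH => ?_
  refine Cartan.eq_zero_of_forall_sum_coeff_mul_coeff_prod_cartan_eq_zero H fun e => ?_
  rw [← hF, hH, map_zero]

end
end
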